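/- arXiv:1511.06810 — 3 statements merged into one kernel-verified Lean document; each statement's English description precedes it below -/
import Mathlib

section
/- Let R be a unital associative (not necessarily commutative) ring, let A and B be two-sided ideals of R, and let a ∈ A, b ∈ B be such that 1+a and 1+b are units of R. Then (1+a)⁻¹·(1+b)⁻¹·(1+a)·(1+b) − 1 − (a·b − b·a) ∈ (A+B)·(A·B + B·A), where products of ideals are ideal products. -/
/-- The product of two two-sided ideals: the two-sided ideal generated by (equivalently, the
additive span of) all products `a * b` with `a ∈ A`, `b ∈ B`. -/
def tsMul {R : Type*} [Ring R] (A B : TwoSidedIdeal R) : TwoSidedIdeal R :=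
  TwoSidedIdeal.span {x : R | ∃ a ∈ A, ∃ b ∈ B, x = a * b}

lemma mem_tsMul {R : Type*} [Ring R] {A B : TwoSidedIdeal R} {x y : R}
    (hx : x ∈ A) (hy : y ∈ B) : x * y ∈ tsMul A B :=
  TwoSidedIdeal.subset_span ⟨x, hx, y, hy, rfl⟩

/-- Let `R` be a unital ring, `A`, `B` two-sided ideals, and `a ∈ A`, `b ∈ B`
such that `1 + a` and `1 + b` are units.  Then
`(1+a)⁻¹ * (1+b)⁻¹ * (1+a) * (1+b) − 1 − (a*b − b*a) ∈ (A + B)·(A·B + B·A)`,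
where `·` is the ideal product and `+` (here `⊔`) the ideal sum. -/
theorem statement1 {R : Type*} [Ring R] (A B : TwoSidedIdeal R) (a b : R)
    (ha : a ∈ A) (hb : b ∈ B) (ua ub : Rˣ) (hua : (ua : R) = 1 + a) (hub : (ub : R) = 1 + b) :
    ((ua⁻¹ : Rˣ) : R) * ((ub⁻¹ : Rˣ) : R) * (ua : R) * (ub : R) - 1 - (a * b - b * a) ∈
      tsMul (A ⊔ B) (tsMul A B ⊔ tsMul B A) := by
  set x : R := ((ua⁻¹ : Rˣ) : R) with hx
  set y : R := ((ub⁻¹ : Rˣ) : R) with hy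
  have hxA : x - 1 ∈ A := by
    have h : x * (1 + a) = 1 := by rw [← hua, hx]; exact_mod_cast ua.inv_mul
    have e : x - 1 = -(x * a) := by
      rw [mul_add, mul_one] at h
      rw [← h]; abel
    rw [e]; exact A.neg_mem (A.mul_mem_left _ _ ha)
  have hyB : y - 1 ∈ B := by
    have h : y * (1 + b) = 1 := by rw [← hub, hy]; exact_mod_cast ub.inv_mul
    have e : y - 1 = -(y * b) := by
      rw [mul_add, mul_one] at h
      rw [← h]; abel
    rw [e]; exact B.neg_mem (B.mul_mem_left _ _ hb)
  have hxyAB : x * y - 1 ∈ A ⊔ B := by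
    have e : x * y - 1 = (x - 1) * y + (y - 1) := by noncomm_ring
    rw [e]
    exact (A ⊔ B).add_mem (TwoSidedIdeal.mem_sup_left (A.mul_mem_right _ _ hxA))
      (TwoSidedIdeal.mem_sup_right hyB)
  have hc : a * b - b * a ∈ tsMul A B ⊔ tsMul B A :=
    (tsMul A B ⊔ tsMul B A).sub_mem (TwoSidedIdeal.mem_sup_left (mem_tsMul ha hb))
      (TwoSidedIdeal.mem_sup_right (mem_tsMul hb ha))
  have huv : (ua : R) * ub - (ub : R) * ua = a * b - b * a := by
    rw [hua, hub]; noncomm_ring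
  have h1 : x * (y * ((ub : R) * ua)) = 1 := by
    rw [hy, Units.inv_mul_cancel_left, hx]; exact_mod_cast ua.inv_mul
  have key : x * y * (ua : R) * ub - 1 - (a * b - b * a)
      = (x * y - 1) * (a * b - b * a) := by
    have e1 : x * y * (ua : R) * ub - x * (y * ((ub : R) * ua))
        = x * y * ((ua : R) * ub - (ub : R) * ua) := by noncomm_ring
    rw [h1, huv] at e1
    rw [e1]; noncomm_ring
  rw [key]
  exact mem_tsMul hxyAB hc
end

section
/- Let θ₂ : π → W be a 2-truncated expansion. Then for all g, h ∈ π, θ₂(g⁻¹ h⁻¹ g h) = p([g] ⊗ [h] − [h] ⊗ [g]). (Degree-2 instance of the paper's Proposition 2.2: on commutators an expansion is given by the Lie bracket in the free Lie algebra on H.) -/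
open scoped TensorProduct

/-- `H := ℝ ⊗_ℤ π^ab`. -/
abbrev HH (π : Type*) [Group π] := TensorProduct ℤ ℝ (Additive (Abelianization π))

/-- `[g] := 1 ⊗ (class of g) ∈ H`. -/
noncomputable def cl {π : Type*} [Group π] (g : π) : HH π :=
  (1 : ℝ) ⊗ₜ[ℤ] (Additive.ofMul (Abelianization.of g))

lemma cl_mul {π : Type*} [Group π] (g h : π) : cl (g * h) = cl g + cl h := by
  simp [cl, map_mul, TensorProduct.tmul_add]

lemma cl_inv {π : Type*} [Group π] (g : π) : cl g⁻¹ = -cl g := by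
  simp [cl, TensorProduct.tmul_neg]

lemma cl_one {π : Type*} [Group π] : cl (1 : π) = 0 := by
  simp [cl]

/-- Let `I₂ ⊆ H ⊗_ℝ H` be a subspace, `W := (H ⊗_ℝ H) ⧸ I₂` with quotient map
`p`, and let `θ₂ : π → W` be a 2-truncated expansion, i.e.
`θ₂ (g*h) = θ₂ g + θ₂ h + p ([g] ⊗ [h])`.  Then for all `g, h ∈ π`,
`θ₂ (g⁻¹ * h⁻¹ * g * h) = p ([g] ⊗ [h] − [h] ⊗ [g])`. -/
theorem statement6 {π : Type*} [Group π] (I₂ : Submodule ℝ (HH π ⊗[ℝ] HH π))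
    (θ₂ : π → (HH π ⊗[ℝ] HH π) ⧸ I₂)
    (hθ : ∀ g h : π, θ₂ (g * h) = θ₂ g + θ₂ h + I₂.mkQ (cl g ⊗ₜ[ℝ] cl h)) :
    ∀ g h : π, θ₂ (g⁻¹ * h⁻¹ * g * h) = I₂.mkQ (cl g ⊗ₜ[ℝ] cl h - cl h ⊗ₜ[ℝ] cl g) := by
  intro g h
  have hinv : ∀ k : π, θ₂ k⁻¹ = -θ₂ k + I₂.mkQ (cl k ⊗ₜ[ℝ] cl k) := by
    intro k
    have h1 := hθ k⁻¹ k
    have h0 := hθ 1 1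
    simp [cl_one] at h0
    rw [inv_mul_cancel, h0, cl_inv] at h1
    have : (0 : (HH π ⊗[ℝ] HH π) ⧸ I₂) = θ₂ k⁻¹ + θ₂ k - I₂.mkQ (cl k ⊗ₜ[ℝ] cl k) := by
      rw [h1]; simp [TensorProduct.neg_tmul, map_neg]; abel
    linear_combination (norm := abel) this.symm
  have e1 : θ₂ (g⁻¹ * h⁻¹ * g * h) =
      θ₂ g⁻¹ + θ₂ h⁻¹ + θ₂ g + θ₂ h
      + I₂.mkQ ((-cl g) ⊗ₜ[ℝ] (-cl h)) + I₂.mkQ ((-cl g + -cl h) ⊗ₜ[ℝ] cl g)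
      + I₂.mkQ ((-cl g + -cl h + cl g) ⊗ₜ[ℝ] cl h) := by
    rw [hθ (g⁻¹ * h⁻¹ * g) h, hθ (g⁻¹ * h⁻¹) g, hθ g⁻¹ h⁻¹]
    simp only [cl_mul, cl_inv]
    abel
  rw [e1, hinv g, hinv h]
  simp only [TensorProduct.neg_tmul, TensorProduct.tmul_neg, TensorProduct.add_tmul, map_neg,
    map_add, map_sub, neg_neg, TensorProduct.sub_tmul]
  abel
end

section
/- Let θ₂ : π → W be a 2-truncated expansion and let φ ∈ Aut(π) satisfy (|φ| ⊗ |φ|)(I₂) ⊆ I₂. Then the map π → W defined by g ↦ θ₂(g) − |φ|_W(θ₂(φ⁻¹(g))) is a group homomorphism into the additive group of W, and there exists a unique ℝ-linear map τ₁^θ(φ) : H → W such that τ₁^θ(φ)([g]) = θ₂(g) − |φ|_W(θ₂(φ⁻¹(g))) for all g ∈ π. (Well-definedness of the first Johnson map of the paper's Section 2.3.) -/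
open scoped TensorProduct

/-- `|φ| : H → H`, the `ℝ`-linear map induced by `φ ∈ Aut(π)`. -/
noncomputable def indH {π : Type*} [Group π] (φ : MulAut π) : HH π →ₗ[ℝ] HH π :=
  LinearMap.baseChange ℝ
    ((MonoidHom.toAdditive (Abelianization.map φ.toMonoidHom)).toIntLinearMap)

/-- `|φ|_W : W → W`, the map induced by `|φ| ⊗ |φ|` on `W = (H ⊗_ℝ H) ⧸ I₂`, given that
`(|φ| ⊗ |φ|)(I₂) ⊆ I₂`. -/
noncomputable def indW {π : Type*} [Group π] (I₂ : Submodule ℝ (HH π ⊗[ℝ] HH π))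
    (φ : MulAut π)
    (hφ : Submodule.map (TensorProduct.map (indH φ) (indH φ)) I₂ ≤ I₂) :
    ((HH π ⊗[ℝ] HH π) ⧸ I₂) →ₗ[ℝ] ((HH π ⊗[ℝ] HH π) ⧸ I₂) :=
  Submodule.mapQ I₂ I₂ (TensorProduct.map (indH φ) (indH φ))
    (Submodule.map_le_iff_le_comap.mp hφ)

/-!
Since `|φ|_W` sends `p([φ⁻¹ g] ⊗ [φ⁻¹ h])` to `p([g] ⊗ [h])`, the map `g ↦ |φ|_W (θ₂ (φ⁻¹ g))` is
again a 2-truncated expansion, and the difference of two 2-truncated expansions is a homomorphism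
`π → W`. As `W` is a real vector space, such a homomorphism factors uniquely through `π^ab` and
then through `ℝ ⊗ π^ab`.
-/

section

variable {π : Type*} [Group π]

theorem indH_cl (φ : MulAut π) (g : π) : indH φ (cl g) = cl (φ g) := by
  simp [indH, cl, LinearMap.baseChange_tmul]

theorem indW_mkQ_tmul_cl (I₂ : Submodule ℝ (HH π ⊗[ℝ] HH π)) (φ : MulAut π)
    (hφ : Submodule.map (TensorProduct.map (indH φ) (indH φ)) I₂ ≤ I₂) (g h : π) :
    indW I₂ φ hφ (I₂.mkQ (cl g ⊗ₜ[ℝ] cl h)) = I₂.mkQ (cl (φ g) ⊗ₜ[ℝ] cl (φ h)) := by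
  simp [indW, TensorProduct.map_tmul, indH_cl]

theorem linearMap_ext_cl {M : Type*} [AddCommGroup M] [Module ℝ M] {τ₁ τ₂ : HH π →ₗ[ℝ] M}
    (h : ∀ g : π, τ₁ (cl g) = τ₂ (cl g)) : τ₁ = τ₂ := by
  refine (LinearMap.liftBaseChangeEquiv ℝ).symm.injective (LinearMap.ext fun x => ?_)
  obtain ⟨g, rfl⟩ := QuotientGroup.mk_surjective (Additive.toMul x)
  exact h g

theorem existsUnique_linearMap_cl {M : Type*} [AddCommGroup M] [Module ℝ M] (f : π → M)
    (hf : ∀ g h : π, f (g * h) = f g + f h) :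
    ∃! τ : HH π →ₗ[ℝ] M, ∀ g : π, τ (cl g) = f g := by
  let F : π →* Multiplicative M := MonoidHom.mk' (fun g => .ofAdd (f g)) hf
  let τ : HH π →ₗ[ℝ] M :=
    LinearMap.liftBaseChange ℝ (MonoidHom.toAdditiveLeft (Abelianization.lift F)).toIntLinearMap
  have hτ : ∀ g : π, τ (cl g) = f g := fun g => by
    simp only [τ, F, cl, LinearMap.liftBaseChange_one_tmul, AddMonoidHom.coe_toIntLinearMap,
      MonoidHom.toAdditiveLeft_apply_apply, toMul_ofMul, Abelianization.lift_apply_of]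
    rfl
  exact ⟨τ, hτ, fun τ' hτ' => linearMap_ext_cl fun g => (hτ' g).trans (hτ g).symm⟩

def IsTruncatedExpansion (I₂ : Submodule ℝ (HH π ⊗[ℝ] HH π)) (θ : π → (HH π ⊗[ℝ] HH π) ⧸ I₂) :
    Prop :=
  ∀ g h : π, θ (g * h) = θ g + θ h + I₂.mkQ (cl g ⊗ₜ[ℝ] cl h)

namespace IsTruncatedExpansion

variable {I₂ : Submodule ℝ (HH π ⊗[ℝ] HH π)} {θ θ' : π → (HH π ⊗[ℝ] HH π) ⧸ I₂}

theorem sub_map_mul (hθ : IsTruncatedExpansion I₂ θ) (hθ' : IsTruncatedExpansion I₂ θ')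
    (g h : π) : θ (g * h) - θ' (g * h) = (θ g - θ' g) + (θ h - θ' h) := by
  rw [hθ, hθ']
  abel

theorem indW_comp (hθ : IsTruncatedExpansion I₂ θ) (φ : MulAut π)
    (hφ : Submodule.map (TensorProduct.map (indH φ) (indH φ)) I₂ ≤ I₂) :
    IsTruncatedExpansion I₂ fun g => indW I₂ φ hφ (θ (φ⁻¹ g)) := fun g h => by
  simp only [map_mul, hθ (φ⁻¹ g), map_add, indW_mkQ_tmul_cl, MulAut.apply_inv_self]

end IsTruncatedExpansion

end

/-- Let `θ₂ : π → W` be a 2-truncated expansion and `φ ∈ Aut(π)` with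
`(|φ| ⊗ |φ|)(I₂) ⊆ I₂`.  Then `g ↦ θ₂ g − |φ|_W (θ₂ (φ⁻¹ g))` is a group homomorphism into
the additive group of `W`, and there is a unique `ℝ`-linear map `τ₁^θ(φ) : H → W` with
`τ₁^θ(φ) [g] = θ₂ g − |φ|_W (θ₂ (φ⁻¹ g))` for all `g ∈ π`. -/
theorem statement8 {π : Type*} [Group π] (I₂ : Submodule ℝ (HH π ⊗[ℝ] HH π))
    (θ₂ : π → (HH π ⊗[ℝ] HH π) ⧸ I₂)
    (hθ : ∀ g h : π, θ₂ (g * h) = θ₂ g + θ₂ h + I₂.mkQ (cl g ⊗ₜ[ℝ] cl h))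
    (φ : MulAut π)
    (hφ : Submodule.map (TensorProduct.map (indH φ) (indH φ)) I₂ ≤ I₂) :
    (∀ g h : π,
      θ₂ (g * h) - indW I₂ φ hφ (θ₂ (φ⁻¹ (g * h))) =
        (θ₂ g - indW I₂ φ hφ (θ₂ (φ⁻¹ g))) + (θ₂ h - indW I₂ φ hφ (θ₂ (φ⁻¹ h)))) ∧
    (∃! τ : HH π →ₗ[ℝ] ((HH π ⊗[ℝ] HH π) ⧸ I₂),
      ∀ g : π, τ (cl g) = θ₂ g - indW I₂ φ hφ (θ₂ (φ⁻¹ g))) := by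
  have hadd := IsTruncatedExpansion.sub_map_mul hθ (IsTruncatedExpansion.indW_comp hθ φ hφ)
  exact ⟨hadd, existsUnique_linearMap_cl _ hadd⟩
end
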